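/- Let D ⊆ 2^[5] be a down set with ∅ ∈ D and nonempty complement U = 2^[5] \ D. Then sdepth(U) > sdepth(D). (This is the combinatorial statement, via Herzog–Vladoiu–Zheng, of: if I is a squarefree monomial ideal of S = K[x₁,…,x₅], then sdepth I > sdepth S/I.) -/

import Mathlib

open Finset

/-- An interval partition of a family `Q` of subsets of `[n]` (identified with `Fin n`):
a finite collection of nonempty intervals `[A,B]`, each contained in `Q`, pairwise
disjoint, and covering `Q`. -/
structure IntervalPartition (n : ℕ) (Q : Finset (Finset (Fin n))) where
  pairs : Finset (Finset (Fin n) × Finset (Fin n))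
  le : ∀ p ∈ pairs, p.1 ⊆ p.2
  sub : ∀ p ∈ pairs, Finset.Icc p.1 p.2 ⊆ Q
  disj : ∀ p ∈ pairs, ∀ q ∈ pairs, p ≠ q →
    Disjoint (Finset.Icc p.1 p.2) (Finset.Icc q.1 q.2)
  covers : ∀ C ∈ Q, ∃ p ∈ pairs, C ∈ Finset.Icc p.1 p.2

/-- The Stanley depth of a family `Q`: the largest `k` such that some interval
partition of `Q` has every interval's maximal element of size at least `k`. -/
noncomputable def sdepth {n : ℕ} (Q : Finset (Finset (Fin n))) : ℕ :=
  sSup {k | ∃ P : IntervalPartition n Q, ∀ p ∈ P.pairs, k ≤ p.2.card}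

/-- `D` is a down set in `2^[n]`. -/
def IsDownSet {n : ℕ} (D : Finset (Finset (Fin n))) : Prop :=
  ∀ B ∈ D, ∀ A, A ⊆ B → A ∈ D

/-- `B` is a maximal element of the family `D`. -/
def MaxElt {n : ℕ} (D : Finset (Finset (Fin n))) (B : Finset (Fin n)) : Prop :=
  B ∈ D ∧ ∀ C ∈ D, B ⊆ C → B = C

/-!
Let `U = 2^[5] \ D`. Since `[5] ∉ D`, every top of a partition of `D` has size at most 4, and
there are three cases.

* `sdepth D ≤ 2`: every up-set avoiding `∅` has a partition with tops of size `≥ 3`. The nonempty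
  sets of size `≤ 2` lie in the five disjoint blocks `[{i}, {i,i+1,i+2}] ∪ {{i-1,i,i+2}}`
  (indices mod 5). If `{i} ∈ U` the whole block lies in `U` and is covered by that interval and a
  singleton; otherwise `U` meets the block in its traces on the two-element chains
  `[{i,i+1}, {i,i+1,i+2}]` and `[{i,i+2}, {i-1,i,i+2}]`, each empty or an interval with a
  3-element top. Larger sets are singletons.
* `sdepth D = 4`: all tops are coatoms `{j}ᶜ`, which forces `U = [S, [5]]` with
  `S = {j | {j}ᶜ ∈ D}`.
* `sdepth D = 3`: complementing, `E = {Xᶜ | X ∈ U}` is a simplicial complex whose non-faces admit a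
  partition with bottoms of size `≤ 2`, and it suffices to give `E` a partition with bottoms of
  size `≤ 1`. Induct on the vertex set: if some vertex `j` is not a face, or its faces form a cone
  `[{j}, T]`, split them off and recurse on the deletion of `j`. Otherwise all bottoms are
  non-edges, so `E` is a flag complex, and restricting the partition to each nonempty `S` shows
  that the induced subcomplex on `S` has nonnegative reduced Euler characteristic. As no vertex is
  a cone point, every vertex has two non-adjacent neighbours; on at most five vertices this yields
  an induced 4- or 5-cycle, whose reduced Euler characteristic is `-1`.
-/

open scoped FinsetFamily

/-- Counts `∅` too, so on a simplicial complex this is minus its reduced Euler characteristic. -/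
def eulerChar {n : ℕ} (Q : Finset (Finset (Fin n))) : ℤ := ∑ X ∈ Q, (-1) ^ #X

def HasIntervalPartition {n : ℕ} (Q : Finset (Finset (Fin n)))
    (R : Finset (Fin n) × Finset (Fin n) → Prop) : Prop :=
  ∃ P : IntervalPartition n Q, ∀ p ∈ P.pairs, R p

section IntervalPartitions

variable {n : ℕ} {Q Q' : Finset (Finset (Fin n))} {R R' : Finset (Fin n) × Finset (Fin n) → Prop}

theorem IntervalPartition.fst_mem (P : IntervalPartition n Q) {p : Finset (Fin n) × Finset (Fin n)}
    (hp : p ∈ P.pairs) : p.1 ∈ Q :=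
  P.sub p hp (mem_Icc.2 ⟨le_rfl, P.le p hp⟩)

theorem IntervalPartition.snd_mem (P : IntervalPartition n Q) {p : Finset (Fin n) × Finset (Fin n)}
    (hp : p ∈ P.pairs) : p.2 ∈ Q :=
  P.sub p hp (mem_Icc.2 ⟨P.le p hp, le_rfl⟩)

theorem hasIntervalPartition_singletons (h : ∀ X ∈ Q, R (X, X)) : HasIntervalPartition Q R := by
  refine ⟨⟨Q.image fun X => (X, X), ?_, ?_, ?_, ?_⟩, ?_⟩
  · simp
  · simp only [mem_image]
    rintro _ ⟨X, hX, rfl⟩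
    simpa using hX
  · simp only [mem_image]
    rintro _ ⟨X, -, rfl⟩ _ ⟨Y, -, rfl⟩ hXY
    simpa using fun h : X = Y => hXY (h ▸ rfl)
  · exact fun C hC => ⟨(C, C), mem_image_of_mem _ hC, by simp⟩
  · simp only [mem_image]
    rintro _ ⟨X, hX, rfl⟩
    exact h X hX

theorem hasIntervalPartition_Icc {A B : Finset (Fin n)} (hAB : A ⊆ B) (hR : R (A, B)) :
    HasIntervalPartition (Icc A B) R :=
  ⟨⟨{(A, B)}, by simpa using hAB, by simp, by simp, fun C hC => ⟨(A, B), by simpa using hC⟩⟩,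
    by simpa using hR⟩

theorem eulerChar_Icc {A B : Finset (Fin n)} (h : A ⊆ B) :
    eulerChar (Icc A B) = if A = B then (-1) ^ #A else 0 := by
  have hdisj : ∀ Y ∈ (B \ A).powerset, Disjoint A Y :=
    fun Y hY => disjoint_of_subset_right (mem_powerset.1 hY) disjoint_sdiff
  rw [eulerChar, Icc_eq_image_powerset h, sum_image fun Y hY Z hZ hYZ => by
      rw [← union_sdiff_cancel_left (hdisj Y hY), hYZ, union_sdiff_cancel_left (hdisj Z hZ)],
    sum_congr rfl fun Y hY => by rw [card_union_of_disjoint (hdisj Y hY), pow_add], ← mul_sum,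
    sum_powerset_neg_one_pow_card]
  by_cases hAB : A = B
  · simp [hAB]
  · have : B \ A ≠ ∅ := fun hBA => hAB (subset_antisymm h (sdiff_eq_empty_iff_subset.1 hBA))
    simp [hAB, this]

namespace HasIntervalPartition

theorem exists_mem {X : Finset (Fin n)} (h : HasIntervalPartition Q R) (hX : X ∈ Q) :
    ∃ p, R p ∧ p.1 ∈ Q ∧ p.2 ∈ Q ∧ p.1 ⊆ X ∧ X ⊆ p.2 := by
  obtain ⟨P, hP⟩ := h
  obtain ⟨p, hp, hXp⟩ := P.covers X hX
  obtain ⟨h1, h2⟩ := mem_Icc.1 hXp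
  exact ⟨p, hP p hp, P.fst_mem hp, P.snd_mem hp, h1, h2⟩

theorem mono (h : HasIntervalPartition Q R) (hR : ∀ p, p.1 ∈ Q → p.2 ∈ Q → R p → R' p) :
    HasIntervalPartition Q R' := by
  obtain ⟨P, hP⟩ := h
  exact ⟨P, fun p hp => hR p (P.fst_mem hp) (P.snd_mem hp) (hP p hp)⟩

theorem union (h : HasIntervalPartition Q R) (h' : HasIntervalPartition Q' R)
    (hd : Disjoint Q Q') : HasIntervalPartition (Q ∪ Q') R := by
  obtain ⟨P, hP⟩ := h
  obtain ⟨P', hP'⟩ := h'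
  have hPP' : ∀ p ∈ P.pairs, ∀ q ∈ P'.pairs, Disjoint (Icc p.1 p.2) (Icc q.1 q.2) :=
    fun p hp q hq => hd.mono (P.sub p hp) (P'.sub q hq)
  refine ⟨⟨P.pairs ∪ P'.pairs, ?_, ?_, ?_, ?_⟩, ?_⟩
  · simp only [mem_union]
    rintro p (hp | hp)
    exacts [P.le p hp, P'.le p hp]
  · simp only [mem_union]
    rintro p (hp | hp)
    exacts [(P.sub p hp).trans subset_union_left, (P'.sub p hp).trans subset_union_right]
  · simp only [mem_union]
    rintro p (hp | hp) q (hq | hq) hpq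
    exacts [P.disj p hp q hq hpq, hPP' p hp q hq, (hPP' q hq p hp).symm, P'.disj p hp q hq hpq]
  · simp only [mem_union]
    rintro C (hC | hC)
    · obtain ⟨p, hp, hCp⟩ := P.covers C hC
      exact ⟨p, Or.inl hp, hCp⟩
    · obtain ⟨p, hp, hCp⟩ := P'.covers C hC
      exact ⟨p, Or.inr hp, hCp⟩
  · simp only [mem_union]
    rintro p (hp | hp)
    exacts [hP p hp, hP' p hp]

theorem biUnion {ι : Type*} [DecidableEq ι] {s : Finset ι} {Q : ι → Finset (Finset (Fin n))}
    (h : ∀ i ∈ s, HasIntervalPartition (Q i) R) (hd : (s : Set ι).PairwiseDisjoint Q) :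
    HasIntervalPartition (s.biUnion Q) R := by
  induction s using Finset.induction_on with
  | empty => exact hasIntervalPartition_singletons (by simp)
  | insert i s hi ih =>
    rw [biUnion_insert]
    refine (h i (mem_insert_self i s)).union
      (ih (fun j hj => h j (mem_insert_of_mem hj)) (hd.subset (by simp))) ?_
    refine (disjoint_biUnion_right _ _ _).2 fun j hj => hd (by simp) (by simp [hj]) ?_
    rintro rfl
    exact hi hj

theorem filter_subset {r : Finset (Fin n) → Prop} (h : HasIntervalPartition Q fun p => r p.1)
    (W : Finset (Fin n)) : HasIntervalPartition {X ∈ Q | X ⊆ W} fun p => r p.1 := by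
  obtain ⟨P, hP⟩ := h
  have hIcc : ∀ A B : Finset (Fin n), Icc A (B ∩ W) = {X ∈ Icc A B | X ⊆ W} := by
    intro A B
    ext X
    simp [subset_inter_iff, and_assoc]
  refine ⟨⟨{p ∈ P.pairs | p.1 ⊆ W}.image fun p => (p.1, p.2 ∩ W), ?_, ?_, ?_, ?_⟩, ?_⟩
  · simp only [mem_image, mem_filter]
    rintro _ ⟨p, ⟨hp, hpW⟩, rfl⟩
    exact subset_inter (P.le p hp) hpW
  · simp only [mem_image, mem_filter]
    rintro _ ⟨p, ⟨hp, -⟩, rfl⟩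
    rw [hIcc]
    exact filter_subset_filter _ (P.sub p hp)
  · simp only [mem_image, mem_filter]
    rintro _ ⟨p, ⟨hp, -⟩, rfl⟩ _ ⟨q, ⟨hq, -⟩, rfl⟩ hpq
    rw [hIcc, hIcc]
    exact disjoint_filter_filter (P.disj p hp q hq fun h => hpq (h ▸ rfl))
  · intro C hC
    obtain ⟨hCQ, hCW⟩ := mem_filter.1 hC
    obtain ⟨p, hp, hCp⟩ := P.covers C hCQ
    obtain ⟨h1, h2⟩ := mem_Icc.1 hCp
    exact ⟨(p.1, p.2 ∩ W), mem_image.2 ⟨p, mem_filter.2 ⟨hp, h1.trans hCW⟩, rfl⟩,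
      mem_Icc.2 ⟨h1, subset_inter h2 hCW⟩⟩
  · simp only [mem_image, mem_filter]
    rintro _ ⟨p, ⟨hp, -⟩, rfl⟩
    exact hP p hp

theorem compls (h : HasIntervalPartition Q R) :
    HasIntervalPartition Qᶜˢ fun p => R (p.2ᶜ, p.1ᶜ) := by
  obtain ⟨P, hP⟩ := h
  have hIcc : ∀ A B : Finset (Fin n), Icc Bᶜ Aᶜ = (Icc A B)ᶜˢ := by
    intro A B
    ext X
    simp only [mem_Icc, mem_compls]
    rw [compl_le_iff_compl_le, le_compl_iff_le_compl, and_comm]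
  refine ⟨⟨P.pairs.image fun p => (p.2ᶜ, p.1ᶜ), ?_, ?_, ?_, ?_⟩, ?_⟩
  · simp only [mem_image]
    rintro _ ⟨p, hp, rfl⟩
    exact compl_subset_compl.2 (P.le p hp)
  · simp only [mem_image]
    rintro _ ⟨p, hp, rfl⟩
    rw [hIcc]
    exact compls_subset_compls.2 (P.sub p hp)
  · simp only [mem_image]
    rintro _ ⟨p, hp, rfl⟩ _ ⟨q, hq, rfl⟩ hpq
    rw [hIcc, hIcc]
    exact (disjoint_map _).2 (P.disj p hp q hq fun h => hpq (h ▸ rfl))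
  · intro C hC
    obtain ⟨p, hp, hCp⟩ := P.covers Cᶜ (mem_compls.1 hC)
    refine ⟨(p.2ᶜ, p.1ᶜ), mem_image_of_mem _ hp, ?_⟩
    rw [hIcc, mem_compls]
    exact hCp
  · simp only [mem_image]
    rintro _ ⟨p, hp, rfl⟩
    simpa using hP p hp

theorem eulerChar_nonneg (h : HasIntervalPartition Q fun p => Even #p.1) : 0 ≤ eulerChar Q := by
  obtain ⟨P, hP⟩ := h
  have hQ : Q = P.pairs.biUnion fun p => Icc p.1 p.2 := by
    ext X
    simp only [mem_biUnion]
    exact ⟨P.covers X, fun ⟨p, hp, hX⟩ => P.sub p hp hX⟩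
  rw [eulerChar, hQ, sum_biUnion fun p hp q hq => P.disj p hp q hq]
  refine sum_nonneg fun p hp => ?_
  rw [← eulerChar, eulerChar_Icc (P.le p hp)]
  split_ifs
  · rw [(hP p hp).neg_one_pow]
    exact zero_le_one
  · exact le_rfl

end HasIntervalPartition

end IntervalPartitions

section StanleyDepth

variable {n : ℕ} {Q : Finset (Finset (Fin n))}

theorem le_sdepth_iff (hQ : Q.Nonempty) {k : ℕ} :
    k ≤ sdepth Q ↔ HasIntervalPartition Q fun p => k ≤ #p.2 := by
  have hbdd : BddAbove {k | HasIntervalPartition Q fun p => k ≤ #p.2} := by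
    refine ⟨n, fun k hk => ?_⟩
    obtain ⟨X, hX⟩ := hQ
    obtain ⟨p, hk, -⟩ := HasIntervalPartition.exists_mem hk hX
    exact hk.trans ((card_le_univ _).trans (Fintype.card_fin n).le)
  have hne : {k | HasIntervalPartition Q fun p => k ≤ #p.2}.Nonempty :=
    ⟨0, hasIntervalPartition_singletons fun _ _ => Nat.zero_le _⟩
  exact ⟨fun hk => (Nat.sSup_mem hne hbdd).mono fun p _ _ hp => hk.trans hp,
    fun hk => le_csSup hbdd hk⟩

theorem sdepth_le_of_forall_card_le (hQ : Q.Nonempty) {k : ℕ} (h : ∀ X ∈ Q, #X ≤ k) :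
    sdepth Q ≤ k := by
  obtain ⟨X, hX⟩ := hQ
  obtain ⟨p, hp, -, hp2, -⟩ := ((le_sdepth_iff ⟨X, hX⟩).1 le_rfl).exists_mem hX
  exact hp.trans (h _ hp2)

theorem hasIntervalPartition_univ_sdiff_of_coatom_tops {D : Finset (Finset (Fin n))}
    (hD : IsDownSet D) (huniv : univ ∉ D) (h : HasIntervalPartition D fun p => n ≤ #p.2 + 1) :
    HasIntervalPartition (univ \ D) fun p => n ≤ #p.2 := by
  set S : Finset (Fin n) := {j | {j}ᶜ ∈ D}
  have hS : univ \ D = Icc S univ := by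
    ext X
    simp only [mem_sdiff, mem_univ, true_and, mem_Icc, subset_univ, and_true]
    constructor
    · intro hX j hj
      by_contra hjX
      exact hX (hD _ (mem_filter.1 hj).2 X fun x hx =>
        mem_compl.2 fun hxj => hjX (mem_singleton.1 hxj ▸ hx))
    · intro hSX hX
      obtain ⟨p, hp, -, hp2, -, hXp⟩ := h.exists_mem hX
      have hlt : #p.2 < n := by
        simpa using (card_lt_iff_ne_univ p.2).2 fun h => huniv (h ▸ hp2)
      obtain ⟨j, hj⟩ : ∃ j, p.2ᶜ = {j} := card_eq_one.1 (by simp [card_compl]; omega)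
      have hjS : j ∈ S := by simp [S, ← hj, hp2]
      have : j ∈ p.2ᶜ := hj ▸ mem_singleton_self j
      exact mem_compl.1 this (hXp (hSX hjS))
  rw [hS]
  exact hasIntervalPartition_Icc (subset_univ S) (by simp)

end StanleyDepth

section UpperSets

variable {n : ℕ} {U : Finset (Finset (Fin n))}

theorem hasIntervalPartition_inter_Icc_of_eq_pair (hU : IsUpperSet (U : Set (Finset (Fin n))))
    {A B : Finset (Fin n)} (hAB : Icc A B = {A, B}) :
    HasIntervalPartition (U ∩ Icc A B) fun p => p.2 = B := by
  by_cases hA : A ∈ U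
  · have hsub : A ⊆ B := (mem_Icc.1 (by simp [hAB] : A ∈ Icc A B)).2
    rw [inter_eq_right.2 fun X hX => hU (mem_Icc.1 hX).1 hA]
    exact hasIntervalPartition_Icc hsub rfl
  · refine hasIntervalPartition_singletons fun X hX => ?_
    obtain ⟨hXU, hXI⟩ := mem_inter.1 hX
    rw [hAB, mem_insert, mem_singleton] at hXI
    rcases hXI with rfl | rfl
    · exact absurd hXU hA
    · rfl

end UpperSets

def cycEdge (i : Fin 5) : Finset (Fin 5) := {i, i + 1}
def cycChord (i : Fin 5) : Finset (Fin 5) := {i, i + 2}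
def cycTriple (i : Fin 5) : Finset (Fin 5) := {i, i + 1, i + 2}
def skewTriple (i : Fin 5) : Finset (Fin 5) := {i - 1, i, i + 2}

def cycBlock (i : Fin 5) : Finset (Finset (Fin 5)) :=
  Icc {i} (cycTriple i) ∪ {skewTriple i}

theorem mem_of_mem_cycBlock : ∀ i, ∀ X ∈ cycBlock i, i ∈ X := by decide

theorem skewTriple_notMem_Icc : ∀ i, skewTriple i ∉ Icc {i} (cycTriple i) := by decide

theorem cycBlock_eq_insert : ∀ i, cycBlock i =
    insert {i} (Icc (cycEdge i) (cycTriple i) ∪ Icc (cycChord i) (skewTriple i)) := by decide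

theorem disjoint_Icc_cycEdge_Icc_cycChord :
    ∀ i, Disjoint (Icc (cycEdge i) (cycTriple i)) (Icc (cycChord i) (skewTriple i)) := by decide

theorem Icc_cycEdge : ∀ i, Icc (cycEdge i) (cycTriple i) = {cycEdge i, cycTriple i} := by decide

theorem Icc_cycChord : ∀ i, Icc (cycChord i) (skewTriple i) = {cycChord i, skewTriple i} := by
  decide

theorem card_cycTriple : ∀ i, #(cycTriple i) = 3 := by decide

theorem card_skewTriple : ∀ i, #(skewTriple i) = 3 := by decide

theorem disjoint_cycBlock : ∀ i j, i ≠ j → Disjoint (cycBlock i) (cycBlock j) := by decide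

theorem exists_mem_cycBlock : ∀ X : Finset (Fin 5), X ≠ ∅ → #X ≤ 2 → ∃ i, X ∈ cycBlock i := by
  decide

section UpperSetsFive

variable {U : Finset (Finset (Fin 5))}

theorem hasIntervalPartition_inter_cycBlock (hU : IsUpperSet (U : Set (Finset (Fin 5))))
    (i : Fin 5) : HasIntervalPartition (U ∩ cycBlock i) fun p => 3 ≤ #p.2 := by
  by_cases hi : {i} ∈ U
  · rw [inter_eq_right.2 fun X hX =>
      hU (singleton_subset_iff.2 (mem_of_mem_cycBlock i X hX)) hi, cycBlock]
    refine HasIntervalPartition.union ?_ ?_ (disjoint_singleton_right.2 (skewTriple_notMem_Icc i))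
    · exact hasIntervalPartition_Icc (by simp [cycTriple]) (card_cycTriple i).ge
    · exact hasIntervalPartition_singletons (by simp [card_skewTriple])
  · rw [cycBlock_eq_insert, inter_insert_of_notMem hi, inter_union_distrib_left]
    refine HasIntervalPartition.union ?_ ?_
      ((disjoint_Icc_cycEdge_Icc_cycChord i).mono inter_subset_right inter_subset_right)
    · exact (hasIntervalPartition_inter_Icc_of_eq_pair hU (Icc_cycEdge i)).mono
        fun p _ _ hp => hp ▸ (card_cycTriple i).ge
    · exact (hasIntervalPartition_inter_Icc_of_eq_pair hU (Icc_cycChord i)).mono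
        fun p _ _ hp => hp ▸ (card_skewTriple i).ge

theorem hasIntervalPartition_three_le_of_isUpperSet (hU : IsUpperSet (U : Set (Finset (Fin 5))))
    (h0 : ∅ ∉ U) : HasIntervalPartition U fun p => 3 ≤ #p.2 := by
  rw [← sdiff_union_inter U (univ.biUnion cycBlock)]
  refine HasIntervalPartition.union ?_ ?_ (disjoint_sdiff_inter _ _)
  · refine hasIntervalPartition_singletons fun X hX => ?_
    obtain ⟨hXU, hXW⟩ := mem_sdiff.1 hX
    show 3 ≤ #X
    by_contra! hlt
    obtain ⟨i, hi⟩ := exists_mem_cycBlock X (by rintro rfl; exact h0 hXU) (by omega)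
    exact hXW (mem_biUnion.2 ⟨i, mem_univ i, hi⟩)
  · rw [inter_biUnion]
    exact HasIntervalPartition.biUnion (fun i _ => hasIntervalPartition_inter_cycBlock hU i)
      fun i _ j _ hij => (disjoint_cycBlock i j hij).mono inter_subset_right inter_subset_right

end UpperSetsFive

section Complexes

variable {n : ℕ} {G : Finset (Fin n)} {E : Finset (Finset (Fin n))}

def starTop (E : Finset (Finset (Fin n))) (j : Fin n) : Finset (Fin n) := {X ∈ E | j ∈ X}.sup id

theorem IsDownSet.filter_notMem (hE : IsDownSet E) (j : Fin n) : IsDownSet {X ∈ E | j ∉ X} := by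
  intro B hB A hAB
  obtain ⟨hBE, hjB⟩ := mem_filter.1 hB
  exact mem_filter.2 ⟨hE B hBE A hAB, fun hjA => hjB (hAB hjA)⟩

theorem IsDownSet.ne_of_pair_mem {i x y : Fin n} (hE : IsDownSet E) (hx : {i, x} ∈ E)
    (hy : {i, y} ∈ E) (hxy : {x, y} ∉ E) : x ≠ y ∧ i ≠ x ∧ i ≠ y := by
  refine ⟨?_, ?_, ?_⟩ <;> rintro rfl
  · exact hxy (hE _ hx _ (by simp))
  · exact hxy hy
  · exact hxy (pair_comm x i ▸ hx)

theorem IsDownSet.pair_mem_of_mem_starTop (hE : IsDownSet E) {j x : Fin n}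
    (hx : x ∈ starTop E j) : {j, x} ∈ E := by
  obtain ⟨X, hX, hxX⟩ := mem_sup.1 hx
  obtain ⟨hXE, hjX⟩ := mem_filter.1 hX
  exact hE X hXE _ (insert_subset hjX (singleton_subset_iff.2 hxX))

theorem starTop_subset (hEG : E ⊆ G.powerset) (j : Fin n) : starTop E j ⊆ G :=
  Finset.sup_le fun _ hX => mem_powerset.1 (hEG (mem_filter.1 hX).1)

theorem hasIntervalPartition_filter_mem (hE : IsDownSet E) {j : Fin n}
    (h : {j} ∈ E → starTop E j ∈ E) :
    HasIntervalPartition {X ∈ E | j ∈ X} fun p => #p.1 ≤ 1 := by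
  by_cases hj : {j} ∈ E
  · have hstar : {X ∈ E | j ∈ X} = Icc {j} (starTop E j) := by
      ext X
      simp only [mem_filter, mem_Icc, singleton_subset_iff]
      refine ⟨fun ⟨hX, hjX⟩ => ⟨hjX, le_sup (f := id) (mem_filter.2 ⟨hX, hjX⟩)⟩,
        fun ⟨hjX, hX⟩ => ⟨hE _ (h hj) X hX, hjX⟩⟩
    rw [hstar]
    exact hasIntervalPartition_Icc (le_sup (f := id) (mem_filter.2 ⟨hj, mem_singleton_self j⟩))
      (by simp)
  · refine hasIntervalPartition_singletons fun X hX => ?_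
    obtain ⟨hXE, hjX⟩ := mem_filter.1 hX
    exact absurd (hE X hXE _ (singleton_subset_iff.2 hjX)) hj

theorem filter_notMem_subset_powerset_erase (hEG : E ⊆ G.powerset) (j : Fin n) :
    {X ∈ E | j ∉ X} ⊆ (G.erase j).powerset := fun _ hX =>
  mem_powerset.2 (subset_erase.2 ⟨mem_powerset.1 (hEG (mem_filter.1 hX).1), (mem_filter.1 hX).2⟩)

theorem powerset_erase_sdiff_filter_notMem (j : Fin n) :
    (G.erase j).powerset \ {X ∈ E | j ∉ X} = {X ∈ G.powerset \ E | X ⊆ G.erase j} := by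
  ext X
  simp only [mem_sdiff, mem_powerset, mem_filter, subset_erase]
  tauto

theorem filter_powerset_sdiff_eq {S : Finset (Fin n)} (hSG : S ⊆ G) :
    {X ∈ G.powerset \ E | X ⊆ S} = S.powerset \ {X ∈ E | X ⊆ S} := by
  ext X
  simp only [mem_filter, mem_sdiff, mem_powerset]
  exact ⟨fun ⟨⟨_, hXE⟩, hXS⟩ => ⟨hXS, fun h => hXE h.1⟩,
    fun ⟨hXS, hXE⟩ => ⟨⟨hXS.trans hSG, fun h => hXE ⟨h, hXS⟩⟩, hXS⟩⟩

structure IsFlagWithNonposEuler (G : Finset (Fin n)) (E : Finset (Finset (Fin n))) : Prop where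
  isDownSet : IsDownSet E
  subset_powerset : E ⊆ G.powerset
  flag : ∀ X ⊆ G, (∀ e ⊆ X, #e = 2 → e ∈ E) → X ∈ E
  eulerChar_le : ∀ S ⊆ G, S.Nonempty → eulerChar {X ∈ E | X ⊆ S} ≤ 0

theorem IsFlagWithNonposEuler.of_hasIntervalPartition (hE : IsDownSet E) (hEG : E ⊆ G.powerset)
    (h : HasIntervalPartition (G.powerset \ E) fun p => #p.1 = 2) :
    IsFlagWithNonposEuler G E where
  isDownSet := hE
  subset_powerset := hEG
  flag X hXG hX := by
    by_contra hXE
    obtain ⟨p, hp, hp1, -, hpX, -⟩ := h.exists_mem (mem_sdiff.2 ⟨mem_powerset.2 hXG, hXE⟩)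
    exact (mem_sdiff.1 hp1).2 (hX p.1 hpX hp)
  eulerChar_le S hSG hS := by
    have hres := (h.mono (R' := fun p => Even #p.1) fun p _ _ hp => hp ▸ even_two).filter_subset
      (r := fun A => Even #A) S
    have := filter_powerset_sdiff_eq hSG ▸ hres.eulerChar_nonneg
    rw [eulerChar, sum_sdiff_eq_sub (fun X hX => mem_powerset.2 (mem_filter.1 hX).2),
      sum_powerset_neg_one_pow_card_of_nonempty hS] at this
    rw [eulerChar]
    linarith

theorem IsFlagWithNonposEuler.exists_pair_notMem_of_starTop_notMem
    (hF : IsFlagWithNonposEuler G E) {i : Fin n} (hi : starTop E i ∉ E) :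
    ∃ x y, {i, x} ∈ E ∧ {i, y} ∈ E ∧ {x, y} ∉ E := by
  by_contra! h
  refine hi (hF.flag _ (starTop_subset hF.subset_powerset i) fun e he he2 => ?_)
  obtain ⟨x, y, -, rfl⟩ := card_eq_two.1 he2
  exact h x y (hF.isDownSet.pair_mem_of_mem_starTop (he (by simp)))
    (hF.isDownSet.pair_mem_of_mem_starTop (he (by simp)))

theorem IsFlagWithNonposEuler.filter_subset_eq (hF : IsFlagWithNonposEuler G E)
    {S : Finset (Fin n)} (hSG : S ⊆ G) {N : Finset (Finset (Fin n))} (hN : ∀ e ∈ N, e ∉ E)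
    (hedge : ∀ e ⊆ S, #e = 2 → e ∉ N → e ∈ E) :
    {X ∈ E | X ⊆ S} = ({X | X ⊆ S ∧ ∀ e ∈ N, ¬e ⊆ X} : Finset (Finset (Fin n))) := by
  ext X
  simp only [mem_filter, mem_univ, true_and]
  constructor
  · rintro ⟨hX, hXS⟩
    exact ⟨hXS, fun e he heX => hN e he (hF.isDownSet X hX e heX)⟩
  · rintro ⟨hXS, hXN⟩
    exact ⟨hF.flag X (hXS.trans hSG) fun e heX he2 =>
      hedge e (heX.trans hXS) he2 fun heN => hXN e heN heX, hXS⟩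

end Complexes

section FlagComplexesOnFive

theorem insert_eq_univ_of_ne {a b c d t : Fin 5} (hab : a ≠ b) (hac : a ≠ c) (had : a ≠ d)
    (hat : a ≠ t) (hbc : b ≠ c) (hbd : b ≠ d) (hbt : b ≠ t) (hcd : c ≠ d) (hct : c ≠ t)
    (hdt : d ≠ t) : ({a, b, c, d, t} : Finset (Fin 5)) = univ :=
  eq_univ_of_card _ (by simp [card_insert_of_notMem, *])

set_option synthInstance.maxSize 100000 in
theorem eulerChar_square : ∀ a b c d : Fin 5, a ≠ b → a ≠ c → a ≠ d → b ≠ c → b ≠ d → c ≠ d →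
    eulerChar ({X | X ⊆ {a, b, c, d} ∧ ¬{a, b} ⊆ X ∧ ¬{c, d} ⊆ X} :
      Finset (Finset (Fin 5))) = 1 := by
  decide +kernel

set_option synthInstance.maxSize 100000 in
theorem eulerChar_pentagon : ∀ a b c d t : Fin 5, a ≠ b → a ≠ c → a ≠ d → a ≠ t → b ≠ c →
    b ≠ d → b ≠ t → c ≠ d → c ≠ t → d ≠ t →
    eulerChar ({X | ¬{a, b} ⊆ X ∧ ¬{b, c} ⊆ X ∧ ¬{c, d} ⊆ X ∧ ¬{d, t} ⊆ X ∧ ¬{t, a} ⊆ X} :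
      Finset (Finset (Fin 5))) = 1 := by
  decide +kernel

namespace IsFlagWithNonposEuler

variable {G : Finset (Fin 5)} {E : Finset (Finset (Fin 5))}

theorem left_mem (hF : IsFlagWithNonposEuler G E) {x y : Fin 5} (h : {x, y} ∈ E) : x ∈ G :=
  mem_powerset.1 (hF.subset_powerset h) (mem_insert_self x {y})

theorem right_mem (hF : IsFlagWithNonposEuler G E) {x y : Fin 5} (h : {x, y} ∈ E) : y ∈ G :=
  hF.left_mem (pair_comm x y ▸ h)

theorem false_of_square (hF : IsFlagWithNonposEuler G E) {a b c d : Fin 5} (hac : {a, c} ∈ E)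
    (had : {a, d} ∈ E) (hbc : {b, c} ∈ E) (hbd : {b, d} ∈ E) (hab : {a, b} ∉ E)
    (hcd : {c, d} ∉ E) : False := by
  obtain ⟨hcd', hac', had'⟩ := hF.isDownSet.ne_of_pair_mem hac had hcd
  obtain ⟨-, hbc', hbd'⟩ := hF.isDownSet.ne_of_pair_mem hbc hbd hcd
  obtain ⟨hab', -, -⟩ := hF.isDownSet.ne_of_pair_mem (pair_comm a c ▸ hac)
    (pair_comm b c ▸ hbc) hab
  have hSG : {a, b, c, d} ⊆ G := by
    simp [insert_subset_iff, hF.left_mem hac, hF.left_mem hbc, hF.right_mem hac, hF.right_mem had]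
  have hS : {X ∈ E | X ⊆ {a, b, c, d}} =
      ({X | X ⊆ {a, b, c, d} ∧ ¬{a, b} ⊆ X ∧ ¬{c, d} ⊆ X} : Finset (Finset (Fin 5))) := by
    rw [hF.filter_subset_eq hSG (N := {{a, b}, {c, d}}) (by simp [hab, hcd])
      fun e he he2 heN => by
        obtain ⟨x, y, hxy, rfl⟩ := card_eq_two.1 he2
        simp only [insert_subset_iff, singleton_subset_iff, mem_insert, mem_singleton] at he heN
        rcases he with ⟨rfl | rfl | rfl | rfl, rfl | rfl | rfl | rfl⟩ <;> simp_all [pair_comm]]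
    ext
    simp
  have := hF.eulerChar_le _ hSG (insert_nonempty _ _)
  rw [hS, eulerChar_square a b c d hab' hac' had' hbc' hbd' hcd'] at this
  exact absurd this (by norm_num)

theorem false_of_pentagon (hF : IsFlagWithNonposEuler G E) {a b c d t : Fin 5}
    (hac : {a, c} ∈ E) (had : {a, d} ∈ E) (hbd : {b, d} ∈ E) (hbt : {b, t} ∈ E)
    (hct : {c, t} ∈ E) (hab : {a, b} ∉ E) (hbc : {b, c} ∉ E) (hcd : {c, d} ∉ E)
    (hdt : {d, t} ∉ E) (hta : {t, a} ∉ E) : False := by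
  obtain ⟨hcd', hac', had'⟩ := hF.isDownSet.ne_of_pair_mem hac had hcd
  obtain ⟨hdt', hbd', hbt'⟩ := hF.isDownSet.ne_of_pair_mem hbd hbt hdt
  obtain ⟨hat', -, hct'⟩ :=
    hF.isDownSet.ne_of_pair_mem (pair_comm a c ▸ hac) hct (pair_comm t a ▸ hta)
  obtain ⟨hab', -, -⟩ :=
    hF.isDownSet.ne_of_pair_mem (pair_comm a d ▸ had) (pair_comm b d ▸ hbd) hab
  obtain ⟨hbc', -, -⟩ :=
    hF.isDownSet.ne_of_pair_mem (pair_comm b t ▸ hbt) (pair_comm c t ▸ hct) hbc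
  have huniv := insert_eq_univ_of_ne hab' hac' had' hat' hbc' hbd' hbt' hcd' hct' hdt'
  have hG : univ ⊆ G := by
    simp [← huniv, insert_subset_iff, hF.left_mem hac, hF.left_mem hbd, hF.left_mem hct,
      hF.right_mem had, hF.right_mem hct]
  have hS : {X ∈ E | X ⊆ univ} = ({X | ¬{a, b} ⊆ X ∧ ¬{b, c} ⊆ X ∧ ¬{c, d} ⊆ X ∧
      ¬{d, t} ⊆ X ∧ ¬{t, a} ⊆ X} : Finset (Finset (Fin 5))) := by
    rw [hF.filter_subset_eq hG (N := {{a, b}, {b, c}, {c, d}, {d, t}, {t, a}})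
      (by simp [hab, hbc, hcd, hdt, hta]) fun e _ he2 heN => by
        obtain ⟨x, y, hxy, rfl⟩ := card_eq_two.1 he2
        have hx : x ∈ ({a, b, c, d, t} : Finset (Fin 5)) := huniv ▸ mem_univ x
        have hy : y ∈ ({a, b, c, d, t} : Finset (Fin 5)) := huniv ▸ mem_univ y
        simp only [mem_insert, mem_singleton] at hx hy heN
        rcases hx with rfl | rfl | rfl | rfl | rfl <;>
          rcases hy with rfl | rfl | rfl | rfl | rfl <;> simp_all [pair_comm]]
    ext
    simp
  have := hF.eulerChar_le _ hG univ_nonempty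
  rw [hS, eulerChar_pentagon a b c d t hab' hac' had' hat' hbc' hbd' hbt' hcd' hct' hdt'] at this
  exact absurd this (by norm_num)

theorem false_of_long_path (hF : IsFlagWithNonposEuler G E)
    (hpath : ∀ i ∈ G, ∃ x y, {i, x} ∈ E ∧ {i, y} ∈ E ∧ {x, y} ∉ E) {a b c d t : Fin 5}
    (hac : {a, c} ∈ E) (had : {a, d} ∈ E) (hbd : {b, d} ∈ E) (hbt : {b, t} ∈ E)
    (hab : {a, b} ∉ E) (hbc : {b, c} ∉ E) (hcd : {c, d} ∉ E) (hdt : {d, t} ∉ E) : False := by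
  obtain ⟨hcd', hac', had'⟩ := hF.isDownSet.ne_of_pair_mem hac had hcd
  obtain ⟨hdt', hbd', hbt'⟩ := hF.isDownSet.ne_of_pair_mem hbd hbt hdt
  obtain ⟨hab', -, -⟩ :=
    hF.isDownSet.ne_of_pair_mem (pair_comm a d ▸ had) (pair_comm b d ▸ hbd) hab
  have hbc' : b ≠ c := by rintro rfl; exact hcd hbd
  have hct' : c ≠ t := by rintro rfl; exact hbc hbt
  have hat' : a ≠ t := by rintro rfl; exact hdt (pair_comm a d ▸ had)
  have huniv := insert_eq_univ_of_ne hab' hac' had' hat' hbc' hbd' hbt' hcd' hct' hdt'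
  -- The neighbours of `c` avoid `b` and `d`, so its non-adjacent pair of neighbours is `{a, t}`.
  obtain ⟨x, y, hcx, hcy, hxy⟩ := hpath c (hF.right_mem hac)
  obtain ⟨hxy', hcx', hcy'⟩ := hF.isDownSet.ne_of_pair_mem hcx hcy hxy
  have hnbr : ∀ z, {c, z} ∈ E → c ≠ z → z = a ∨ z = t := by
    intro z hz hcz
    have hz' : z ∈ ({a, b, c, d, t} : Finset (Fin 5)) := huniv ▸ mem_univ z
    simp only [mem_insert, mem_singleton] at hz'
    rcases hz' with rfl | rfl | rfl | rfl | rfl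
    · exact Or.inl rfl
    · exact absurd (pair_comm c z ▸ hz) hbc
    · exact absurd rfl hcz
    · exact absurd hz hcd
    · exact Or.inr rfl
  rcases hnbr x hcx hcx' with rfl | rfl <;> rcases hnbr y hcy hcy' with rfl | rfl
  · exact hxy' rfl
  · exact hF.false_of_pentagon hac had hbd hbt hcy hab hbc hcd hdt (pair_comm x y ▸ hxy)
  · exact hF.false_of_pentagon hac had hbd hbt hcx hab hbc hcd hdt hxy
  · exact hxy' rfl

theorem false_of_cherry (hF : IsFlagWithNonposEuler G E)
    (hpath : ∀ i ∈ G, ∃ x y, {i, x} ∈ E ∧ {i, y} ∈ E ∧ {x, y} ∉ E) {a b c d : Fin 5} (hb : b ∈ G)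
    (hac : {a, c} ∈ E) (had : {a, d} ∈ E) (hab : {a, b} ∉ E) (hbc : {b, c} ∉ E)
    (hcd : {c, d} ∉ E) : False := by
  obtain ⟨hcd', hac', had'⟩ := hF.isDownSet.ne_of_pair_mem hac had hcd
  have hab' : a ≠ b := by rintro rfl; exact hab (hF.isDownSet _ hac _ (by simp))
  have hbc' : b ≠ c := by rintro rfl; exact hab hac
  have hbd' : b ≠ d := by rintro rfl; exact hab had
  -- The neighbours of `b` avoid `a` and `c`, so `d` is one of its non-adjacent pair of neighbours.
  obtain ⟨x, y, hbx, hby, hxy⟩ := hpath b hb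
  obtain ⟨hxy', hbx', hby'⟩ := hF.isDownSet.ne_of_pair_mem hbx hby hxy
  have hax : a ≠ x := by rintro rfl; exact hab (pair_comm b a ▸ hbx)
  have hay : a ≠ y := by rintro rfl; exact hab (pair_comm b a ▸ hby)
  have hcx : c ≠ x := by rintro rfl; exact hbc hbx
  have hcy : c ≠ y := by rintro rfl; exact hbc hby
  have hd : d ∈ ({a, b, c, x, y} : Finset (Fin 5)) :=
    insert_eq_univ_of_ne hab' hac' hax hay hbc' hbx' hby' hcx hcy hxy' ▸ mem_univ d
  simp only [mem_insert, mem_singleton] at hd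
  rcases hd with rfl | rfl | rfl | rfl | rfl
  · exact had' rfl
  · exact hbd' rfl
  · exact hcd' rfl
  · exact hF.false_of_long_path hpath hac had hbx hby hab hbc hcd hxy
  · exact hF.false_of_long_path hpath hac had hby hbx hab hbc hcd (pair_comm (α := Fin 5) _ _ ▸ hxy)

theorem false_of_forall_exists_pair_notMem (hF : IsFlagWithNonposEuler G E) (hG : G.Nonempty)
    (hpath : ∀ i ∈ G, ∃ x y, {i, x} ∈ E ∧ {i, y} ∈ E ∧ {x, y} ∉ E) : False := by
  obtain ⟨v, hv⟩ := hG
  obtain ⟨a, b, hva, hvb, hab⟩ := hpath v hv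
  obtain ⟨c, d, hac, had, hcd⟩ := hpath a (hF.right_mem hva)
  have hb := hF.right_mem hvb
  by_cases hbc : {b, c} ∈ E
  · by_cases hbd : {b, d} ∈ E
    · exact hF.false_of_square hac had hbc hbd hab hcd
    · exact hF.false_of_cherry hpath hb had hac hab hbd (pair_comm c d ▸ hcd)
  · exact hF.false_of_cherry hpath hb hac had hab hbc hcd

end IsFlagWithNonposEuler

end FlagComplexesOnFive

section Duality

variable {G : Finset (Fin 5)} {E : Finset (Finset (Fin 5))}

theorem exists_starTop_mem (hE : IsDownSet E) (hEG : E ⊆ G.powerset) (hG : G.Nonempty)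
    (h : HasIntervalPartition (G.powerset \ E) fun p => #p.1 ≤ 2) :
    ∃ j ∈ G, {j} ∈ E → starTop E j ∈ E := by
  by_contra! hcone
  obtain ⟨v, hv⟩ := hG
  have h2 : HasIntervalPartition (G.powerset \ E) fun p => #p.1 = 2 := h.mono fun p hp _ hle => by
    obtain ⟨hpG, hpE⟩ := mem_sdiff.1 hp
    interval_cases hc : #p.1
    · exact absurd (hE _ (hcone v hv).1 _ (by simp [card_eq_zero.1 hc])) hpE
    · obtain ⟨x, hx⟩ := card_eq_one.1 hc
      exact absurd (hx ▸ (hcone x (mem_powerset.1 hpG (by simp [hx]))).1) hpE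
    · rfl
  have hF := IsFlagWithNonposEuler.of_hasIntervalPartition hE hEG h2
  exact hF.false_of_forall_exists_pair_notMem ⟨v, hv⟩ fun i hi =>
    hF.exists_pair_notMem_of_starTop_notMem (hcone i hi).2

theorem hasIntervalPartition_card_fst_le_one_of_powerset_sdiff (hE : IsDownSet E)
    (hEG : E ⊆ G.powerset)
    (h : HasIntervalPartition (G.powerset \ E) fun p => #p.1 ≤ 2) :
    HasIntervalPartition E fun p => #p.1 ≤ 1 := by
  induction G using Finset.strongInduction generalizing E with
  | H G ih =>
  rcases G.eq_empty_or_nonempty with rfl | hG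
  · refine hasIntervalPartition_singletons fun X hX => ?_
    simp [subset_empty.1 (mem_powerset.1 (hEG hX))]
  obtain ⟨j, hj, hstar⟩ := exists_starTop_mem hE hEG hG h
  have hdel := ih (G.erase j) (erase_ssubset hj) (hE.filter_notMem j)
    (filter_notMem_subset_powerset_erase hEG j)
    (powerset_erase_sdiff_filter_notMem j ▸ h.filter_subset (r := fun A => #A ≤ 2) (G.erase j))
  rw [← filter_union_filter_not_eq (p := (j ∈ ·)) E]
  exact (hasIntervalPartition_filter_mem hE hstar).union hdel (disjoint_filter_filter_not E E _)

end Duality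

theorem hasIntervalPartition_univ_sdiff_four_le_of_three_le {D : Finset (Finset (Fin 5))}
    (hD : IsDownSet D) (h : HasIntervalPartition D fun p => 3 ≤ #p.2) :
    HasIntervalPartition (univ \ D) fun p => 4 ≤ #p.2 := by
  have hE : IsDownSet (univ \ D)ᶜˢ := by
    intro B hB A hAB
    simp only [mem_compls, mem_sdiff, mem_univ, true_and] at hB ⊢
    exact fun hA => hB (hD _ hA _ (compl_subset_compl.2 hAB))
  have hDc : (univ : Finset (Fin 5)).powerset \ (univ \ D)ᶜˢ = Dᶜˢ := by
    ext X
    simp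
  have hEc := hasIntervalPartition_card_fst_le_one_of_powerset_sdiff hE
    (fun X _ => mem_powerset.2 (subset_univ X))
    (hDc ▸ h.compls.mono fun p _ _ hp => by rw [card_compl, Fintype.card_fin] at hp; omega)
  rw [← compls_compls (univ \ D)]
  exact hEc.compls.mono fun p _ _ hp => by rw [card_compl, Fintype.card_fin] at hp; omega

/-- If `D ⊆ 2^[5]` is a down set with `∅ ∈ D` and nonempty complement
`U = 2^[5] \ D`, then `sdepth(U) > sdepth(D)`. -/
theorem sdepth_ideal_gt_quotient_five
    (D : Finset (Finset (Fin 5))) (hD : IsDownSet D) (h0 : ∅ ∈ D)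
    (hU : ((Finset.univ : Finset (Finset (Fin 5))) \ D).Nonempty) :
    sdepth D < sdepth ((Finset.univ : Finset (Finset (Fin 5))) \ D) := by
  have huniv : univ ∉ D := fun h => by
    obtain ⟨X, hX⟩ := hU
    exact (mem_sdiff.1 hX).2 (hD _ h X (subset_univ X))
  have hUup : IsUpperSet ((univ \ D : Finset (Finset (Fin 5))) : Set (Finset (Fin 5))) :=
    fun A B hAB hA => by
      simp only [coe_sdiff, coe_univ, Set.mem_sdiff, Set.mem_univ, mem_coe, true_and] at hA ⊢
      exact fun hB => hA (hD B hB A hAB)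
  have hle : sdepth D ≤ 4 := sdepth_le_of_forall_card_le ⟨∅, h0⟩ fun X hX => by
    have := (card_lt_iff_ne_univ X).2 fun h => huniv (h ▸ hX)
    simp at this
    omega
  have hP := (le_sdepth_iff ⟨∅, h0⟩).1 (le_refl (sdepth D))
  rw [Nat.lt_iff_add_one_le, le_sdepth_iff hU]
  rcases (by omega : sdepth D ≤ 2 ∨ sdepth D = 3 ∨ sdepth D = 4) with hd | hd | hd
  · exact (hasIntervalPartition_three_le_of_isUpperSet hUup (by simp [h0])).mono
      fun p _ _ hp => by omega
  · rw [hd] at hP ⊢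
    exact hasIntervalPartition_univ_sdiff_four_le_of_three_le hD hP
  · rw [hd] at hP ⊢
    exact hasIntervalPartition_univ_sdiff_of_coatom_tops hD huniv (hP.mono fun p _ _ hp => by omega)
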